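/- Let A and B be lattice polygonal regions in the plane such that A ∩ B is convex and nonempty. Then there exists a convex lattice polygonal region Q (the convex hull of a finite set of lattice points) such that A ∩ B ⊆ Q and every point x of Q satisfies Metric.infDist x (A ∩ B) < Real.sqrt 2. -/

import Mathlib

/-- A point of the Euclidean plane is a *lattice point* if both its coordinates
are integers. -/
def IsLatticePoint (p : EuclideanSpace ℝ (Fin 2)) : Prop :=
  (∃ m : ℤ, p 0 = (m : ℝ)) ∧ (∃ k : ℤ, p 1 = (k : ℝ))

/-- A *lattice polygonal region* is a finite union of closed triangles
(convex hulls of three-point sets) all of whose vertices are lattice points. -/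
def IsLatticePolygonalRegion (P : Set (EuclideanSpace ℝ (Fin 2))) : Prop :=
  ∃ T : Finset (EuclideanSpace ℝ (Fin 2) × EuclideanSpace ℝ (Fin 2) × EuclideanSpace ℝ (Fin 2)),
    (∀ t ∈ T, IsLatticePoint t.1 ∧ IsLatticePoint t.2.1 ∧ IsLatticePoint t.2.2) ∧
    P = ⋃ t ∈ T, convexHull ℝ ({t.1, t.2.1, t.2.2} : Set (EuclideanSpace ℝ (Fin 2)))

open Metric
lemma myConvexOn_infDist {E : Type*} [NormedAddCommGroup E] [NormedSpace ℝ E]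
    {s : Set E} (hs : Convex ℝ s) (hne : s.Nonempty) :
    ConvexOn ℝ Set.univ (fun x => Metric.infDist x s) := by
  refine ⟨convex_univ, fun x _ y _ a b ha hb hab => ?_⟩
  refine le_of_forall_pos_le_add fun ε hε => ?_
  obtain ⟨p, hp, hxp⟩ := (Metric.infDist_lt_iff hne).1
    (show infDist x s < infDist x s + ε by linarith)
  obtain ⟨q, hq, hyq⟩ := (Metric.infDist_lt_iff hne).1
    (show infDist y s < infDist y s + ε by linarith)
  have hz : a • p + b • q ∈ s := hs hp hq ha hb hab
  calc infDist (a • x + b • y) s ≤ dist (a • x + b • y) (a • p + b • q) :=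
        Metric.infDist_le_dist_of_mem hz
    _ ≤ dist (a • x) (a • p) + dist (b • y) (b • q) := dist_add_add_le _ _ _ _
    _ = a * dist x p + b * dist y q := by
        rw [dist_smul₀, dist_smul₀, Real.norm_of_nonneg ha, Real.norm_of_nonneg hb]
    _ ≤ a * (infDist x s + ε) + b * (infDist y s + ε) := by
        have := mul_le_mul_of_nonneg_left hxp.le ha
        have := mul_le_mul_of_nonneg_left hyq.le hb
        linarith
    _ = a * infDist x s + b * infDist y s + ε := by linear_combination ε * hab

def pt (m k : ℤ) : EuclideanSpace ℝ (Fin 2) := WithLp.toLp 2 ![(m : ℝ), (k : ℝ)]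

lemma pt_lattice (m k : ℤ) : IsLatticePoint (pt m k) := ⟨⟨m, rfl⟩, ⟨k, rfl⟩⟩

lemma sq_mem (x : EuclideanSpace ℝ (Fin 2)) :
    x ∈ convexHull ℝ ({pt ⌊x 0⌋ ⌊x 1⌋, pt ⌊x 0⌋ (⌊x 1⌋ + 1),
      pt (⌊x 0⌋ + 1) ⌊x 1⌋, pt (⌊x 0⌋ + 1) (⌊x 1⌋ + 1)} :
      Set (EuclideanSpace ℝ (Fin 2))) := by
  set m := ⌊x 0⌋; set k := ⌊x 1⌋
  set f0 := x 0 - m with hf0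
  set f1 := x 1 - k with hf1
  have h00 : (0:ℝ) ≤ f0 := by simp [hf0]; exact Int.floor_le _
  have h01 : f0 ≤ 1 := by simp [hf0]; linarith [Int.lt_floor_add_one (x 0)]
  have h10 : (0:ℝ) ≤ f1 := by simp [hf1]; exact Int.floor_le _
  have h11 : f1 ≤ 1 := by simp [hf1]; linarith [Int.lt_floor_add_one (x 1)]
  have hC := convex_convexHull ℝ ({pt m k, pt m (k + 1), pt (m + 1) k, pt (m + 1) (k + 1)} :
      Set (EuclideanSpace ℝ (Fin 2)))
  have c1 : pt m k ∈ convexHull ℝ ({pt m k, pt m (k + 1), pt (m + 1) k, pt (m + 1) (k + 1)} :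
      Set (EuclideanSpace ℝ (Fin 2))) := subset_convexHull _ _ (by simp)
  have c2 : pt m (k+1) ∈ convexHull ℝ ({pt m k, pt m (k + 1), pt (m + 1) k, pt (m + 1) (k + 1)} :
      Set (EuclideanSpace ℝ (Fin 2))) := subset_convexHull _ _ (by simp)
  have c3 : pt (m+1) k ∈ convexHull ℝ ({pt m k, pt m (k + 1), pt (m + 1) k, pt (m + 1) (k + 1)} :
      Set (EuclideanSpace ℝ (Fin 2))) := subset_convexHull _ _ (by simp)
  have c4 : pt (m+1) (k+1) ∈ convexHull ℝ ({pt m k, pt m (k + 1), pt (m + 1) k, pt (m + 1) (k + 1)} :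
      Set (EuclideanSpace ℝ (Fin 2))) := subset_convexHull _ _ (by simp)
  have hy0 := hC c1 c2 (by linarith : (0:ℝ) ≤ 1 - f1) h10 (by ring)
  have hy1 := hC c3 c4 (by linarith : (0:ℝ) ≤ 1 - f1) h10 (by ring)
  have hx := hC hy0 hy1 (by linarith : (0:ℝ) ≤ 1 - f0) h00 (by ring)
  convert hx using 1
  ext i
  fin_cases i <;>
    simp [pt, PiLp.add_apply, PiLp.smul_apply, smul_eq_mul, Matrix.smul_cons] <;> ring_nf <;> simp [hf0, hf1]

/-- Outer mode preserves convexity: if `A ∩ B` is convex and nonempty,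
then it admits a *convex* lattice polygonal outer rounding, namely the convex
hull of a finite set of lattice points. -/
theorem outer_rounding_convex
    (A B : Set (EuclideanSpace ℝ (Fin 2)))
    (hA : IsLatticePolygonalRegion A) (hB : IsLatticePolygonalRegion B)
    (hconv : Convex ℝ (A ∩ B)) (hAB : (A ∩ B).Nonempty) :
    ∃ (S : Finset (EuclideanSpace ℝ (Fin 2))),
      (∀ v ∈ S, IsLatticePoint v) ∧
      A ∩ B ⊆ convexHull ℝ (S : Set (EuclideanSpace ℝ (Fin 2))) ∧
      ∀ x ∈ convexHull ℝ (S : Set (EuclideanSpace ℝ (Fin 2))),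
        Metric.infDist x (A ∩ B) < Real.sqrt 2 := by
  classical
  -- A is bounded
  obtain ⟨T, _, rfl⟩ := hA
  set A := ⋃ t ∈ T, convexHull ℝ ({t.1, t.2.1, t.2.2} : Set (EuclideanSpace ℝ (Fin 2))) with hAdef
  have hAbd : Bornology.IsBounded A := by
    rw [hAdef]
    refine (Bornology.isBounded_biUnion_finset T).2 fun t _ => ?_
    exact (Set.Finite.isCompact_convexHull (𝕜 := ℝ) (Set.toFinite _)).isBounded
  obtain ⟨r, hr⟩ := (hAbd.subset <| Set.inter_subset_left).subset_closedBall 0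
  -- coordinate bounds
  have hcoord : ∀ x ∈ A ∩ B, ∀ i : Fin 2, |x i| ≤ r := by
    intro x hx i
    have h1 : ‖x‖ ≤ r := by simpa [dist_zero_right] using mem_closedBall.1 (hr hx)
    refine le_trans ?_ h1
    rw [EuclideanSpace.norm_eq]
    have : |x i| = Real.sqrt (|x i| ^ 2) := by
      rw [Real.sqrt_sq_eq_abs, abs_abs]
    rw [this]
    apply Real.sqrt_le_sqrt
    exact Finset.single_le_sum (f := fun j => ‖x j‖ ^ 2)
      (fun j _ => by positivity) (Finset.mem_univ i)
  set M : ℤ := ⌈r⌉ + 1 with hM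
  have hfloor_mem : ∀ x ∈ A ∩ B, ∀ i : Fin 2,
      ⌊x i⌋ ∈ Finset.Icc (-M) M ∧ ⌊x i⌋ + 1 ∈ Finset.Icc (-M) M := by
    intro x hx i
    have h := abs_le.1 (hcoord x hx i)
    have hub : ⌊x i⌋ + 1 ≤ M := by
      have : ⌊x i⌋ ≤ ⌈r⌉ := Int.floor_le_ceil .. |>.trans_eq rfl |>.trans
        (Int.ceil_le_ceil h.2)
      omega
    have hlb : -M ≤ ⌊x i⌋ := by
      rw [hM]
      have : ((-⌈r⌉ - 1 : ℤ) : ℝ) ≤ x i := by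
        push_cast
        have := Int.le_ceil r
        linarith [h.1]
      have := Int.le_floor.2 this
      omega
    simp only [Finset.mem_Icc]
    omega
  set K := A ∩ B with hK
  set S : Finset (EuclideanSpace ℝ (Fin 2)) :=
    ((Finset.Icc (-M) M ×ˢ Finset.Icc (-M) M).filter
      (fun p => Metric.infDist (pt p.1 p.2) K < Real.sqrt 2)).image
      (fun p => pt p.1 p.2) with hS
  have hS_mem : ∀ (p q : ℤ), p ∈ Finset.Icc (-M) M → q ∈ Finset.Icc (-M) M →
      Metric.infDist (pt p q) K < Real.sqrt 2 → pt p q ∈ S := by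
    intro p q hp hq hd
    exact Finset.mem_image.2 ⟨(p, q),
      Finset.mem_filter.2 ⟨Finset.mem_product.2 ⟨hp, hq⟩, hd⟩, rfl⟩
  have hS_dist : ∀ v ∈ S, Metric.infDist v K < Real.sqrt 2 := by
    intro v hv
    obtain ⟨p, hp, rfl⟩ := Finset.mem_image.1 hv
    exact (Finset.mem_filter.1 hp).2
  refine ⟨S, ?_, ?_, ?_⟩
  · intro v hv
    obtain ⟨p, _, rfl⟩ := Finset.mem_image.1 hv
    exact pt_lattice _ _
  · -- K ⊆ hull S
    intro x hx
    have hm := hfloor_mem x hx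
    set m := ⌊x 0⌋ with hm0
    set k := ⌊x 1⌋ with hk0
    have hf0l := Int.floor_le (x 0)
    have hf0u := Int.lt_floor_add_one (x 0)
    have hf1l := Int.floor_le (x 1)
    have hf1u := Int.lt_floor_add_one (x 1)
    have hdcalc : ∀ p q : ℤ, ((p:ℝ) - x 0) ^ 2 + ((q:ℝ) - x 1) ^ 2 < 2 →
        Metric.infDist (pt p q) K < Real.sqrt 2 := by
      intro p q h
      refine lt_of_le_of_lt (Metric.infDist_le_dist_of_mem hx) ?_
      have e0 : pt p q 0 = (p : ℝ) := rfl
      have e1 : pt p q 1 = (q : ℝ) := rfl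
      rw [EuclideanSpace.dist_eq, Fin.sum_univ_two, e0, e1]
      simp only [Real.dist_eq, sq_abs]
      exact Real.sqrt_lt_sqrt (by positivity) h
    by_cases hlat : x 0 = (m : ℝ) ∧ x 1 = (k : ℝ)
    · have hxpt : x = pt m k := by
        ext i; fin_cases i
        · exact hlat.1
        · exact hlat.2
      have : pt m k ∈ S := by
        apply hS_mem _ _ (hm 0).1 (hm 1).1
        rw [← hxpt, Metric.infDist_zero_of_mem hx]
        exact Real.sqrt_pos.2 (by norm_num)
      rw [hxpt]
      exact subset_convexHull ℝ _ this
    · have hne : (m : ℝ) < x 0 ∨ (k : ℝ) < x 1 := by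
        rcases not_and_or.1 hlat with h | h
        · exact Or.inl (lt_of_le_of_ne hf0l (Ne.symm h))
        · exact Or.inr (lt_of_le_of_ne hf1l (Ne.symm h))
      have c1 : pt m k ∈ S :=
        hS_mem _ _ (hm 0).1 (hm 1).1 (hdcalc _ _ (by push_cast; nlinarith))
      have c2 : pt m (k + 1) ∈ S :=
        hS_mem _ _ (hm 0).1 (hm 1).2 (hdcalc _ _ (by push_cast; nlinarith))
      have c3 : pt (m + 1) k ∈ S :=
        hS_mem _ _ (hm 0).2 (hm 1).1 (hdcalc _ _ (by push_cast; nlinarith))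
      have c4 : pt (m + 1) (k + 1) ∈ S := by
        refine hS_mem _ _ (hm 0).2 (hm 1).2 (hdcalc _ _ ?_)
        push_cast
        rcases hne with h | h <;> nlinarith
      refine convexHull_mono ?_ (sq_mem x)
      intro v hv
      simp only [Set.mem_insert_iff, Set.mem_singleton_iff] at hv
      rcases hv with rfl | rfl | rfl | rfl
      · exact c1
      · exact c2
      · exact c3
      · exact c4
  · intro x hx
    obtain ⟨y, hyS, hle⟩ := (myConvexOn_infDist hconv hAB).exists_ge_of_mem_convexHull
      (Set.subset_univ _) hx
    exact lt_of_le_of_lt hle (hS_dist y hyS)
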